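/- Let K = 2, n ≥ 1, λ_1 = 1 and λ_2 = λ with λ > 1. With the n type-1 jobs and n type-2 jobs having mutually independent exponential durations of means 1 and λ respectively, define C_FTPP = Σ_{a=1}^{2n} Σ_{b=1}^a P_b (with P_1, …, P_{2n} listing all jobs in nondecreasing order of their means) and C_OPT = Σ_j P_j + Σ_{1≤i<j≤2n} min(P_i, P_j). Then E[C_FTPP] ≤ (2 − 4(λ − 1)/((1 + λ)² + 4λ))·E[C_OPT]. -/

import Mathlib

/-!
A nonnegative random variable with tail `P(Z > t) = exp (-r t)` has mean `1 / r` (layer-cake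
formula), and the minimum of two independent such variables of rates `a` and `b` has this tail with
rate `a + b`. Hence both expectations are explicit. FTPP runs the `n` jobs of mean `1` first, so
`E[C_FTPP] = n² + n (n + 1) (1 + λ) / 2`, while summing the expected minima over all pairs gives
`E[C_OPT] = n (1 + λ) + n (n - 1) (1 + λ) / 4 + n² λ / (1 + λ)`. The constant
`2 - 4 (λ - 1) / ((1 + λ)² + 4 λ) = 2 (λ + 1) (λ + 3) / ((1 + λ)² + 4 λ)` is the limit of the
ratio of the two as `n → ∞`, and the gap is `n` times a polynomial in `λ` with positive
coefficients.
-/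

open MeasureTheory ProbabilityTheory Finset Real

lemma expMeasure_Iio_zero (r : ℝ) : expMeasure r (Set.Iio 0) = 0 := by
  rw [expMeasure, gammaMeasure, withDensity_apply _ measurableSet_Iio]
  exact lintegral_gammaPDF_of_nonpos le_rfl

lemma expMeasure_Ioi {r t : ℝ} (hr : 0 < r) (ht : 0 ≤ t) :
    expMeasure r (Set.Ioi t) = ENNReal.ofReal (exp (-(r * t))) := by
  have := isProbabilityMeasure_expMeasure hr
  have hexp : exp (-(r * t)) ≤ 1 := exp_le_one_iff.mpr (by nlinarith)
  rw [← Set.compl_Iic, prob_compl_eq_one_sub measurableSet_Iic, ← ofReal_cdf,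
    cdf_expMeasure_eq hr, if_pos ht, ENNReal.ofReal_sub _ (exp_pos _).le, ENNReal.ofReal_one,
    ENNReal.sub_sub_cancel ENNReal.one_ne_top (ENNReal.ofReal_le_one.mpr hexp)]

lemma integral_exp_neg_mul_Ioi {r : ℝ} (hr : 0 < r) :
    ∫ t in Set.Ioi (0 : ℝ), exp (-(r * t)) = r⁻¹ := by
  have h := integral_comp_mul_left_Ioi (fun x => exp (-x)) 0 hr
  rwa [mul_zero, integral_exp_neg_Ioi_zero, smul_eq_mul, mul_one] at h

section Sums

variable {ι M : Type*} [Fintype ι] [LinearOrder ι] [LocallyFiniteOrderTop ι]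
  [LocallyFiniteOrderBot ι]

lemma sum_eq_sum_Iio_add_add_sum_Ioi [AddCommMonoid M] (f : ι → M) (i : ι) :
    ∑ j, f j = ∑ j ∈ Iio i, f j + f i + ∑ j ∈ Ioi i, f j := by
  rw [add_assoc, ← sum_insert notMem_Ioi_self, Ioi_insert,
    ← sum_union (disjoint_left.2 fun j hj hj' => ?_)]
  · congr; ext j; simp [lt_or_ge]
  · exact (mem_Iio.1 hj).not_ge (mem_Ici.1 hj')

lemma sum_sum_eq_sum_add_two_nsmul_sum_sum_Ioi [AddCommMonoid M] {F : ι → ι → M}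
    (hF : ∀ i j, F i j = F j i) :
    ∑ i, ∑ j, F i j = ∑ i, F i i + 2 • ∑ i, ∑ j ∈ Ioi i, F i j := by
  have hIio : ∑ i, ∑ j ∈ Iio i, F i j = ∑ i, ∑ j ∈ Ioi i, F i j := by
    rw [sum_comm' (t' := univ) (s' := fun j => Ioi j) (by simp)]
    exact sum_congr rfl fun i _ => sum_congr rfl fun j _ => hF j i
  rw [sum_congr rfl fun i _ => sum_eq_sum_Iio_add_add_sum_Ioi (F i) i, sum_add_distrib,
    sum_add_distrib, hIio]
  abel

lemma sum_sum_Iic_eq {N : ℕ} [AddCommMonoid M] (f : Fin N → M) :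
    ∑ a, ∑ b ∈ Iic a, f b = ∑ b : Fin N, (N - (b : ℕ)) • f b := by
  rw [sum_comm' (t' := univ) (s' := fun b => Ici b) (by simp)]
  simp [Fin.card_Ici]

end Sums

lemma card_filter_fst_eq {κ ι : Type*} [Fintype κ] [Fintype ι] [DecidableEq κ] {N : ℕ}
    (e : Fin N ≃ κ × ι) (k : κ) :
    #{b | (e b).1 = k} = Fintype.card ι := by
  rw [card_equiv e (t := {p | p.1 = k}) (by simp),
    show ({p : κ × ι | p.1 = k} : Finset _) = {k} ×ˢ univ by ext ⟨a, b⟩; simp [eq_comm]]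
  simp

lemma fst_eq_zero_iff_lt {n : ℕ} (e : Fin (n * 2) ≃ Fin 2 × Fin n)
    (he : Monotone fun b => (e b).1) (b : Fin (n * 2)) : (e b).1 = 0 ↔ (b : ℕ) < n := by
  have hcard : #{b | (e b).1 = 0} = n := by simpa using card_filter_fst_eq e 0
  constructor
  · intro hb
    have hsub : Iic b ⊆ ({b | (e b).1 = 0} : Finset _) := fun a ha => by
      simpa [hb] using he (mem_Iic.1 ha)
    simpa [hcard] using card_le_card hsub
  · intro hb
    by_contra hb'
    have hsub : ({b | (e b).1 = 0} : Finset _) ⊆ Iio b := fun a ha =>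
      mem_Iio.2 <| lt_of_not_ge fun hba => by
        simpa [Fin.eq_one_of_ne_zero _ hb', (mem_filter.1 ha).2] using he hba
    have hle := card_le_card hsub
    rw [hcard, Fin.card_Iio] at hle
    omega

section ExponentialTail

variable {Ω : Type*} [MeasurableSpace Ω] {μ : Measure Ω}

structure HasExponentialTail (μ : Measure Ω) (Z : Ω → ℝ) (r : ℝ) : Prop where
  aemeasurable : AEMeasurable Z μ
  nonneg : 0 ≤ᵐ[μ] Z
  measure_lt : ∀ t, 0 ≤ t → μ {ω | t < Z ω} = ENNReal.ofReal (exp (-(r * t)))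

lemma hasExponentialTail_of_map_eq {Z : Ω → ℝ} {r : ℝ} (hr : 0 < r)
    (hZ : μ.map Z = expMeasure r) : HasExponentialTail μ Z r := by
  have hZm : AEMeasurable Z μ :=
    .of_map_ne_zero (hZ ▸ (isProbabilityMeasure_expMeasure hr).ne_zero)
  refine ⟨hZm, ?_, fun t ht => ?_⟩
  · have hneg : μ (Z ⁻¹' Set.Iio 0) = 0 := by
      rw [← Measure.map_apply_of_aemeasurable hZm measurableSet_Iio, hZ, expMeasure_Iio_zero]
    filter_upwards [measure_eq_zero_iff_ae_notMem.1 hneg] with ω hω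
    simpa using hω
  · rw [← expMeasure_Ioi hr ht, ← hZ, Measure.map_apply_of_aemeasurable hZm measurableSet_Ioi]
    rfl

lemma HasExponentialTail.min_of_indepFun {X Y : Ω → ℝ} {a b : ℝ}
    (hX : HasExponentialTail μ X a) (hY : HasExponentialTail μ Y b) (hXY : IndepFun X Y μ) :
    HasExponentialTail μ (fun ω => min (X ω) (Y ω)) (a + b) := by
  refine ⟨hX.aemeasurable.min hY.aemeasurable, ?_, fun t ht => ?_⟩
  · filter_upwards [hX.nonneg, hY.nonneg] with ω hXω hYω using le_min hXω hYω
  · calc μ {ω | t < min (X ω) (Y ω)} = μ (X ⁻¹' Set.Ioi t ∩ Y ⁻¹' Set.Ioi t) := by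
          congr 1; ext ω; simp
      _ = μ {ω | t < X ω} * μ {ω | t < Y ω} :=
          hXY.measure_inter_preimage_eq_mul _ _ measurableSet_Ioi measurableSet_Ioi
      _ = ENNReal.ofReal (exp (-((a + b) * t))) := by
          rw [hX.measure_lt t ht, hY.measure_lt t ht, ← ENNReal.ofReal_mul (exp_pos _).le,
            ← exp_add]
          ring_nf

namespace HasExponentialTail

variable {Z : Ω → ℝ} {r : ℝ}

lemma lintegral_ofReal (hZ : HasExponentialTail μ Z r) (hr : 0 < r) :
    ∫⁻ ω, ENNReal.ofReal (Z ω) ∂μ = ENNReal.ofReal r⁻¹ := by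
  rw [lintegral_eq_lintegral_meas_lt μ hZ.nonneg hZ.aemeasurable,
    setLIntegral_congr_fun measurableSet_Ioi fun t ht => hZ.measure_lt t (le_of_lt ht),
    ← ofReal_integral_eq_lintegral_ofReal, integral_exp_neg_mul_Ioi hr]
  · simpa only [neg_mul] using (exp_neg_integrableOn_Ioi 0 hr).integrable
  · exact ae_of_all _ fun t => (exp_pos _).le

lemma integrable (hZ : HasExponentialTail μ Z r) (hr : 0 < r) : Integrable Z μ :=
  ⟨hZ.aemeasurable.aestronglyMeasurable, by
    rw [hasFiniteIntegral_iff_ofReal hZ.nonneg, hZ.lintegral_ofReal hr]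
    exact ENNReal.ofReal_lt_top⟩

lemma integral_eq (hZ : HasExponentialTail μ Z r) (hr : 0 < r) : ∫ ω, Z ω ∂μ = r⁻¹ := by
  rw [integral_eq_lintegral_of_nonneg_ae hZ.nonneg hZ.aemeasurable.aestronglyMeasurable,
    hZ.lintegral_ofReal hr, ENNReal.toReal_ofReal (by positivity)]

end HasExponentialTail

lemma integral_sum_sum_Iic {N : ℕ} {Y : Fin N → Ω → ℝ} {m : Fin N → ℝ}
    (hY : ∀ b, Integrable (Y b) μ) (hm : ∀ b, ∫ ω, Y b ω ∂μ = m b) :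
    ∫ ω, ∑ a, ∑ b ∈ Iic a, Y b ω ∂μ = ∑ b : Fin N, (N - (b : ℕ) : ℕ) * m b := by
  rw [integral_finsetSum _ fun a _ => integrable_finsetSum _ fun b _ => hY b]
  simp_rw [integral_finsetSum _ fun b _ => hY b, hm, sum_sum_Iic_eq, nsmul_eq_mul]

lemma integral_sum_add_sum_Ioi_min {ι : Type*} [Fintype ι] {N : ℕ} (e : Fin N ≃ ι)
    {X : ι → Ω → ℝ} {r : ι → ℝ} (hr : ∀ p, 0 < r p)
    (hX : ∀ p, HasExponentialTail μ (X p) (r p))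
    (hindep : Pairwise fun p q => IndepFun (X p) (X q) μ) :
    ∫ ω, (∑ j, X (e j) ω + ∑ i, ∑ j ∈ Ioi i, min (X (e i) ω) (X (e j) ω)) ∂μ
      = ∑ p, (r p)⁻¹ + (∑ p, ∑ q, (r p + r q)⁻¹ - ∑ p, (r p + r p)⁻¹) / 2 := by
  have hmin : ∀ i j : Fin N, i < j →
      HasExponentialTail μ (fun ω => min (X (e i) ω) (X (e j) ω)) (r (e i) + r (e j)) :=
    fun i j hij => (hX _).min_of_indepFun (hX _) (hindep (e.injective.ne hij.ne))
  have hmin_int : ∀ i, Integrable (fun ω => ∑ j ∈ Ioi i, min (X (e i) ω) (X (e j) ω)) μ :=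
    fun i => integrable_finsetSum _ fun j hj =>
      (hmin i j (mem_Ioi.1 hj)).integrable (add_pos (hr _) (hr _))
  rw [integral_add (integrable_finsetSum _ fun j _ => (hX _).integrable (hr _))
      (integrable_finsetSum _ fun i _ => hmin_int i),
    integral_finsetSum _ fun j _ => (hX _).integrable (hr _),
    integral_finsetSum _ fun i _ => hmin_int i]
  have hpairs := sum_sum_eq_sum_add_two_nsmul_sum_sum_Ioi
    (F := fun i j : Fin N => (r (e i) + r (e j))⁻¹) fun i j => by rw [add_comm]
  have hfull : ∑ i, ∑ j, (r (e i) + r (e j))⁻¹ = ∑ p, ∑ q, (r p + r q)⁻¹ := by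
    rw [← e.sum_comp]
    exact sum_congr rfl fun i _ => e.sum_comp fun q => (r (e i) + r q)⁻¹
  rw [hfull, e.sum_comp fun p => (r p + r p)⁻¹, two_nsmul] at hpairs
  have hS : ∑ i, ∫ ω, ∑ j ∈ Ioi i, min (X (e i) ω) (X (e j) ω) ∂μ
      = ∑ i, ∑ j ∈ Ioi i, (r (e i) + r (e j))⁻¹ := sum_congr rfl fun i _ => by
    rw [integral_finsetSum _ fun j hj =>
      (hmin i j (mem_Ioi.1 hj)).integrable (add_pos (hr _) (hr _))]
    exact sum_congr rfl fun j hj =>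
      (hmin i j (mem_Ioi.1 hj)).integral_eq (add_pos (hr _) (hr _))
  rw [hS, sum_congr rfl fun j _ => (hX (e j)).integral_eq (hr _), e.sum_comp fun p => (r p)⁻¹]
  linarith

end ExponentialTail

lemma sum_range_natCast_sub (n : ℕ) : ∑ i ∈ range n, ((n - i : ℕ) : ℝ) = n * (n + 1) / 2 := by
  induction n with
  | zero => simp
  | succ n ih =>
    simp only [sum_range_succ', Nat.add_sub_add_right, Nat.sub_zero, ih]
    push_cast; ring

lemma sum_sub_mul_ite_lt (n : ℕ) (x y : ℝ) :
    ∑ b : Fin (n * 2), ((n * 2 - b : ℕ) : ℝ) * (if (b : ℕ) < n then x else y)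
      = n ^ 2 * x + n * (n + 1) / 2 * (x + y) := by
  rw [Fin.sum_univ_eq_sum_range (fun b => ((n * 2 - b : ℕ) : ℝ) * if b < n then x else y),
    mul_two, sum_range_add]
  have hlow : ∀ i ∈ range n, ((n + n - i : ℕ) : ℝ) * (if i < n then x else y)
      = n * x + ((n - i : ℕ) : ℝ) * x := fun i hi => by
    rw [if_pos (mem_range.1 hi), Nat.add_sub_assoc (mem_range.1 hi).le]
    push_cast; ring
  have hhigh : ∀ i, ((n + n - (n + i) : ℕ) : ℝ) * (if n + i < n then x else y)
      = ((n - i : ℕ) : ℝ) * y := fun i => by simp [Nat.add_sub_add_left]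
  simp only [sum_congr rfl hlow, hhigh, sum_add_distrib, ← sum_mul, sum_range_natCast_sub,
    sum_const, card_range, nsmul_eq_mul]
  ring

lemma flowTime_ratio_bound {n lambda : ℝ} (hn : 0 ≤ n) (hlambda : 0 < lambda) :
    n ^ 2 + n * (n + 1) / 2 * (1 + lambda) ≤
      (2 - 4 * (lambda - 1) / ((1 + lambda) ^ 2 + 4 * lambda)) *
        (n * (1 + lambda) + n * (n - 1) * (1 + lambda) / 4 + n ^ 2 * lambda / (1 + lambda)) := by
  have hgap : (2 - 4 * (lambda - 1) / ((1 + lambda) ^ 2 + 4 * lambda)) *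
        (n * (1 + lambda) + n * (n - 1) * (1 + lambda) / 4 + n ^ 2 * lambda / (1 + lambda))
        - (n ^ 2 + n * (n + 1) / 2 * (1 + lambda))
      = n * (lambda ^ 4 + 5 * lambda ^ 3 + 11 * lambda ^ 2 + 11 * lambda + 4)
          / (((1 + lambda) ^ 2 + 4 * lambda) * (1 + lambda)) := by
    field_simp
    ring
  have hgap_nonneg : 0 ≤ n * (lambda ^ 4 + 5 * lambda ^ 3 + 11 * lambda ^ 2 + 11 * lambda + 4)
      / (((1 + lambda) ^ 2 + 4 * lambda) * (1 + lambda)) := by positivity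
  linarith

theorem stmt_4_general
    {Ω : Type*} [MeasurableSpace Ω] (μ : Measure Ω)
    (n : ℕ)
    (lambda : ℝ) (hlambda : 1 < lambda)
    (P : Fin 2 → Fin n → Ω → ℝ)
    (hdist1 : ∀ i, Measure.map (P 0 i) μ = expMeasure 1)
    (hdist2 : ∀ i, Measure.map (P 1 i) μ = expMeasure (1 / lambda))
    (hindep : iIndepFun
      (fun p : Fin 2 × Fin n => P p.1 p.2) μ)
    (e : Fin (n * 2) ≃ Fin 2 × Fin n)
    -- the enumeration lists the jobs in nondecreasing order of their means,
    -- i.e. all type-1 jobs (mean 1) before all type-2 jobs (mean λ)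
    (he : ∀ a b : Fin (n * 2), a ≤ b → (e a).1 ≤ (e b).1)
    (CFTPP COPT : Ω → ℝ)
    (hCFTPP : ∀ ω, CFTPP ω =
      ∑ a : Fin (n * 2), ∑ b ∈ Finset.Iic a, P (e b).1 (e b).2 ω)
    (hCOPT : ∀ ω, COPT ω =
      (∑ j : Fin (n * 2), P (e j).1 (e j).2 ω) +
      ∑ i : Fin (n * 2), ∑ j ∈ Finset.Ioi i,
        min (P (e i).1 (e i).2 ω) (P (e j).1 (e j).2 ω)) :
    ∫ ω, CFTPP ω ∂μ ≤
      (2 - 4 * (lambda - 1) / ((1 + lambda) ^ 2 + 4 * lambda)) * ∫ ω, COPT ω ∂μ := by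
  have hlambda0 : 0 < lambda := by linarith
  set r : Fin 2 → ℝ := ![1, lambda⁻¹]
  have hr : ∀ k, 0 < r k := Fin.forall_fin_two.2 ⟨one_pos, inv_pos.2 hlambda0⟩
  have hX : ∀ p : Fin 2 × Fin n, HasExponentialTail μ (P p.1 p.2) (r p.1) := by
    rintro ⟨k, i⟩
    fin_cases k
    · exact hasExponentialTail_of_map_eq one_pos (hdist1 i)
    · exact hasExponentialTail_of_map_eq (hr 1) (by simpa [r] using hdist2 i)
  have hmean : ∀ b : Fin (n * 2),
      ∫ ω, P (e b).1 (e b).2 ω ∂μ = if (b : ℕ) < n then 1 else lambda := by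
    intro b
    rw [(hX (e b)).integral_eq (hr _)]
    by_cases hb : (b : ℕ) < n
    · simp [r, hb, (fst_eq_zero_iff_lt e he b).2 hb]
    · simp [r, hb, Fin.eq_one_of_ne_zero _ ((fst_eq_zero_iff_lt e he b).not.2 hb)]
  have hFTPP : ∫ ω, CFTPP ω ∂μ = n ^ 2 + n * (n + 1) / 2 * (1 + lambda) := by
    rw [integral_congr_ae (ae_of_all _ hCFTPP),
      integral_sum_sum_Iic (fun b => (hX (e b)).integrable (hr _)) hmean, sum_sub_mul_ite_lt]
    ring
  have hOPT : ∫ ω, COPT ω ∂μ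
      = n * (1 + lambda) + n * (n - 1) * (1 + lambda) / 4 + n ^ 2 * lambda / (1 + lambda) := by
    rw [integral_congr_ae (ae_of_all _ hCOPT),
      integral_sum_add_sum_Ioi_min e (fun p => hr p.1) hX fun p q hpq => hindep.indepFun hpq]
    simp only [r, Fintype.sum_prod_type, Fin.sum_univ_two, sum_const, card_univ,
      Fintype.card_fin, nsmul_eq_mul, Matrix.cons_val_zero, Matrix.cons_val_one,
      Matrix.cons_val_fin_one, inv_one, inv_inv]
    field_simp
    ring
  rw [hFTPP, hOPT]
  exact flowTime_ratio_bound n.cast_nonneg hlambda0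

/-- Competitive ratio bound for FTPP with two job types of means `1` and `λ > 1`:
`E[C_FTPP] ≤ (2 - 4(λ-1)/((1+λ)² + 4λ)) * E[C_OPT]`. -/
theorem stmt_4
    {Ω : Type*} [MeasurableSpace Ω] (μ : Measure Ω) [IsProbabilityMeasure μ]
    (n : ℕ) (hn : 1 ≤ n)
    (lambda : ℝ) (hlambda : 1 < lambda)
    (P : Fin 2 → Fin n → Ω → ℝ)
    (hmeas : ∀ k i, Measurable (P k i))
    (hdist1 : ∀ i, Measure.map (P 0 i) μ = expMeasure 1)
    (hdist2 : ∀ i, Measure.map (P 1 i) μ = expMeasure (1 / lambda))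
    (hindep : iIndepFun
      (fun p : Fin 2 × Fin n => P p.1 p.2) μ)
    (e : Fin (n * 2) ≃ Fin 2 × Fin n)
    -- the enumeration lists the jobs in nondecreasing order of their means,
    -- i.e. all type-1 jobs (mean 1) before all type-2 jobs (mean λ)
    (he : ∀ a b : Fin (n * 2), a ≤ b → (e a).1 ≤ (e b).1)
    (CFTPP COPT : Ω → ℝ)
    (hCFTPP : ∀ ω, CFTPP ω =
      ∑ a : Fin (n * 2), ∑ b ∈ Finset.Iic a, P (e b).1 (e b).2 ω)
    (hCOPT : ∀ ω, COPT ω =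
      (∑ j : Fin (n * 2), P (e j).1 (e j).2 ω) +
      ∑ i : Fin (n * 2), ∑ j ∈ Finset.Ioi i,
        min (P (e i).1 (e i).2 ω) (P (e j).1 (e j).2 ω)) :
    ∫ ω, CFTPP ω ∂μ ≤
      (2 - 4 * (lambda - 1) / ((1 + lambda) ^ 2 + 4 * lambda)) * ∫ ω, COPT ω ∂μ :=
  stmt_4_general μ n lambda hlambda P hdist1 hdist2 hindep e he CFTPP COPT hCFTPP hCOPT
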